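/- arXiv:2209.12214 — 10 statements merged into one kernel-verified Lean document; each statement's English description precedes it below -/
import Mathlib

section
/- For every μ > 0 there exists a unique a > 0 such that f(a)/a = μ. -/
theorem stmt_1 (f : ℝ → ℝ) (C p θ : ℝ)
    (hf : ContDiff ℝ 2 f) (hodd : ∀ t : ℝ, f (-t) = -f t)
    (hf0 : f 0 = 0) (hf'0 : deriv f 0 = 0)
    (hC : 0 < C) (hp1 : 1 < p) (hp2 : p < 2)
    (hf'' : ∀ t : ℝ, |deriv (deriv f) t| ≤ C * |t| ^ (p - 1))
    (hθ1 : 2 < θ) (hθ2 : θ < 6)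
    (hAR : ∀ t : ℝ, t ≠ 0 →
      0 < θ * (∫ s in (0 : ℝ)..t, f s) ∧ θ * (∫ s in (0 : ℝ)..t, f s) ≤ t * f t)
    (hmono₁ : StrictMonoOn (fun t => f t / |t|) (Set.Iio (0 : ℝ)))
    (hmono₂ : StrictMonoOn (fun t => f t / |t|) (Set.Ioi (0 : ℝ))) :
    ∀ μ : ℝ, 0 < μ → ∃! a : ℝ, 0 < a ∧ f a / a = μ := by
  intro μ hμ
  have hfc : Continuous f := hf.continuous
  set F : ℝ → ℝ := fun t => ∫ s in (0 : ℝ)..t, f s with hFdef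
  have hF : ∀ t : ℝ, HasDerivAt F (f t) t := by
    intro t
    exact intervalIntegral.integral_hasDerivAt_right
      (hfc.intervalIntegrable _ _)
      (hfc.stronglyMeasurableAtFilter _ _) hfc.continuousAt
  have hFpos : ∀ t : ℝ, 0 < t → 0 < F t := by
    intro t ht
    have h := (hAR t (ne_of_gt ht)).1
    nlinarith
  -- growth: F t ≥ F 1 * t ^ θ on [1, ∞), via log derivative
  set L : ℝ → ℝ := fun t => Real.log (F t) - θ * Real.log t with hLdef
  have hLderiv : ∀ t : ℝ, 0 < t → HasDerivAt L (f t / F t - θ * t⁻¹) t := by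
    intro t ht
    exact ((hF t).log (ne_of_gt (hFpos t ht))).sub
      ((Real.hasDerivAt_log (ne_of_gt ht)).const_mul θ)
  have hLmono : MonotoneOn L (Set.Ici (1 : ℝ)) := by
    apply monotoneOn_of_deriv_nonneg (convex_Ici 1)
    · apply ContinuousOn.sub
      · apply ContinuousOn.log
        · exact Continuous.continuousOn (by
            exact continuous_iff_continuousAt.2 fun t => (hF t).continuousAt)
        · intro t ht
          exact ne_of_gt (hFpos t (lt_of_lt_of_le one_pos ht))
      · exact (continuousOn_const.mul (Real.continuousOn_log.mono (by
          intro t ht; exact ne_of_gt (lt_of_lt_of_le one_pos ht))))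
    · intro t ht
      rw [interior_Ici] at ht
      exact ((hLderiv t (lt_trans one_pos ht)).differentiableAt).differentiableWithinAt
    · intro t ht
      rw [interior_Ici] at ht
      have ht0 : (0 : ℝ) < t := lt_trans one_pos ht
      rw [(hLderiv t ht0).deriv]
      have hFt := hFpos t ht0
      have hAR' := (hAR t (ne_of_gt ht0)).2
      rw [sub_nonneg, mul_inv_le_iff₀' ht0, mul_div_assoc', le_div_iff₀ hFt]
      exact hAR'
  have hgrow : ∀ t : ℝ, 1 ≤ t → F 1 * t ^ θ ≤ F t := by
    intro t ht
    have ht0 : (0 : ℝ) < t := lt_of_lt_of_le one_pos ht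
    have h := hLmono (Set.self_mem_Ici) (Set.mem_Ici.2 ht) ht
    simp only [hLdef, Real.log_one, mul_zero, sub_zero] at h
    have : Real.log (F 1 * t ^ θ) ≤ Real.log (F t) := by
      rw [Real.log_mul (ne_of_gt (hFpos 1 one_pos)) (ne_of_gt (Real.rpow_pos_of_pos ht0 θ)),
        Real.log_rpow ht0]
      linarith
    have hpos : 0 < F 1 * t ^ θ := mul_pos (hFpos 1 one_pos) (Real.rpow_pos_of_pos ht0 θ)
    calc F 1 * t ^ θ = Real.exp (Real.log (F 1 * t ^ θ)) := (Real.exp_log hpos).symm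
      _ ≤ Real.exp (Real.log (F t)) := Real.exp_le_exp.2 this
      _ = F t := Real.exp_log (hFpos t ht0)
  -- lower bound for f t / t for t ≥ 1
  have hlow : ∀ t : ℝ, 1 ≤ t → θ * F 1 * t ^ (θ - 2) ≤ f t / t := by
    intro t ht
    have ht0 : (0 : ℝ) < t := lt_of_lt_of_le one_pos ht
    have h1 := hgrow t ht
    have h2 := (hAR t (ne_of_gt ht0)).2
    have hrw : t ^ (θ - 2) = t ^ θ / t ^ 2 := by
      rw [Real.rpow_sub ht0]
      norm_num [Real.rpow_two]
    have ht2 : (0 : ℝ) < t ^ 2 := by positivity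
    have hθ0 : (0 : ℝ) < θ := by linarith
    have key : θ * (F 1 * t ^ θ) ≤ t * f t := le_trans (by nlinarith) h2
    have htne : t ≠ 0 := ne_of_gt ht0
    calc θ * F 1 * t ^ (θ - 2) = θ * (F 1 * t ^ θ) / t ^ 2 := by rw [hrw]; ring
      _ ≤ t * f t / t ^ 2 := by gcongr
      _ = f t / t := by field_simp
  -- small t : f t / t → 0 as t → 0
  have hslope : Filter.Tendsto (fun t => f t / t) (nhdsWithin 0 (Set.Ioi 0)) (nhds 0) := by
    have hd : HasDerivAt f 0 0 := by
      have h := (hf.differentiable (by norm_num)).differentiableAt (x := (0:ℝ))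
      simpa [hf'0] using h.hasDerivAt
    have := hasDerivAt_iff_tendsto_slope.1 hd
    have h2 : Filter.Tendsto (slope f 0) (nhdsWithin 0 (Set.Ioi 0)) (nhds 0) :=
      this.mono_left (nhdsWithin_mono 0 (fun x hx => ne_of_gt hx))
    refine h2.congr' ?_
    filter_upwards [self_mem_nhdsWithin] with t ht
    simp [slope_def_field, hf0, div_eq_mul_inv, mul_comm]
  obtain ⟨t₀, ht₀μ, ht₀pos⟩ :=
    ((hslope.eventually_lt_const hμ).and self_mem_nhdsWithin).exists
  have ht₀pos : (0:ℝ) < t₀ := ht₀pos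
  -- large t
  have htop : Filter.Tendsto (fun t : ℝ => θ * F 1 * t ^ (θ - 2)) Filter.atTop Filter.atTop := by
    apply Filter.Tendsto.const_mul_atTop
    · exact mul_pos (by linarith) (hFpos 1 one_pos)
    · exact tendsto_rpow_atTop (by linarith)
  obtain ⟨t₁, ht₁μ, ht₁ge⟩ :=
    ((htop.eventually_ge_atTop μ).and (Filter.eventually_ge_atTop (max 1 t₀))).exists
  have ht₁1 : (1 : ℝ) ≤ t₁ := le_trans (le_max_left _ _) ht₁ge
  have ht₁t₀ : t₀ ≤ t₁ := le_trans (le_max_right _ _) ht₁ge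
  have hgt₁ : μ ≤ f t₁ / t₁ := le_trans ht₁μ (hlow t₁ ht₁1)
  -- IVT
  have hgcont : ContinuousOn (fun t => f t / t) (Set.Icc t₀ t₁) := by
    apply ContinuousOn.div hfc.continuousOn continuousOn_id
    intro t ht
    exact ne_of_gt (lt_of_lt_of_le ht₀pos ht.1)
  have hmem : μ ∈ Set.Icc (f t₀ / t₀) (f t₁ / t₁) := ⟨le_of_lt ht₀μ, hgt₁⟩
  obtain ⟨a, haI, hga⟩ := intermediate_value_Icc ht₁t₀ hgcont hmem
  have hapos : 0 < a := lt_of_lt_of_le ht₀pos haI.1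
  refine ⟨a, ⟨hapos, hga⟩, ?_⟩
  intro b ⟨hbpos, hgb⟩
  apply hmono₂.injOn (Set.mem_Ioi.2 hbpos) (Set.mem_Ioi.2 hapos)
  simp only [abs_of_pos hbpos, abs_of_pos hapos, hga, hgb]
end

section
/- The function t ↦ f̃(t)/t is nondecreasing on (0,∞). -/
theorem stmt_3 (f phi ftilde : ℝ → ℝ) (C p θ V₀ k a α₀ δ : ℝ)
    (hf : ContDiff ℝ 2 f) (hodd : ∀ t : ℝ, f (-t) = -f t)
    (hf0 : f 0 = 0) (hf'0 : deriv f 0 = 0)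
    (hC : 0 < C) (hp1 : 1 < p) (hp2 : p < 2)
    (hf'' : ∀ t : ℝ, |deriv (deriv f) t| ≤ C * |t| ^ (p - 1))
    (hθ1 : 2 < θ) (hθ2 : θ < 6)
    (hAR : ∀ t : ℝ, t ≠ 0 →
      0 < θ * (∫ s in (0 : ℝ)..t, f s) ∧ θ * (∫ s in (0 : ℝ)..t, f s) ≤ t * f t)
    (hmono₁ : StrictMonoOn (fun t => f t / |t|) (Set.Iio (0 : ℝ)))
    (hmono₂ : StrictMonoOn (fun t => f t / |t|) (Set.Ioi (0 : ℝ)))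
    (hV₀ : 0 < V₀) (hk : θ / (θ - 2) < k)
    (ha : 0 < a) (hα₀ : 0 < α₀) (hδ : 0 < δ)
    (ha' : f a / a = V₀ / k - δ)
    (ha'' : f (a + 2 * α₀) / (a + 2 * α₀) = V₀ / k)
    (hphi : ContDiff ℝ (⊤ : ℕ∞) phi) (hphie : ∀ t : ℝ, phi (-t) = phi t)
    (hphi01 : ∀ t : ℝ, 0 ≤ phi t ∧ phi t ≤ 1)
    (hphimono : AntitoneOn phi (Set.Ici (0 : ℝ)))
    (hphi1 : ∀ t : ℝ, 0 ≤ t → t ≤ a + α₀ → phi t = 1)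
    (hphi0 : ∀ t : ℝ, a + 2 * α₀ ≤ t → phi t = 0)
    (hft : ∀ t : ℝ, ftilde t = f t * phi t + (1 - phi t) * (V₀ / k) * t) :
    MonotoneOn (fun t => ftilde t / t) (Set.Ioi (0 : ℝ)) := by
  intro x hx y hy hxy
  simp only [Set.mem_Ioi] at hx hy
  have hb : (0:ℝ) < a + 2 * α₀ := by linarith
  set c := V₀ / k with hc
  have hg : ∀ s t : ℝ, 0 < s → 0 < t → s ≤ t → f s / s ≤ f t / t := by
    intro s t hs ht hst
    rcases eq_or_lt_of_le hst with h | h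
    · rw [h]
    · have := hmono₂ (Set.mem_Ioi.mpr hs) (Set.mem_Ioi.mpr ht) h
      simpa [abs_of_pos hs, abs_of_pos ht] using this.le
  have hgb : ∀ t : ℝ, 0 < t → t ≤ a + 2*α₀ → f t / t ≤ c := by
    intro t ht hlt
    calc f t / t ≤ f (a+2*α₀) / (a+2*α₀) := hg t _ ht hb hlt
    _ = c := ha''
  have key : ∀ t : ℝ, 0 < t → ftilde t / t = c + phi t * (f t / t - c) := by
    intro t ht
    have ht' : t ≠ 0 := ne_of_gt ht
    rw [hft t]
    field_simp
    ring
  simp only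
  rw [key x hx, key y hy]
  have hpx := (hphi01 x).1
  have hpy := (hphi01 y).1
  rcases le_or_gt y (a + 2*α₀) with hyb | hyb
  · have hgy : f y / y - c ≤ 0 := by linarith [hgb y hy hyb]
    have hgx : f x / x ≤ f y / y := hg x y hx hy hxy
    have hphixy : phi y ≤ phi x := hphimono (le_of_lt hx) (le_of_lt hy) hxy
    nlinarith
  · have hpy0 : phi y = 0 := hphi0 y hyb.le
    rcases le_or_gt (a + 2*α₀) x with hxb | hxb
    · have hpx0 : phi x = 0 := hphi0 x hxb
      simp [hpx0, hpy0]
    · have hgx : f x / x - c ≤ 0 := by linarith [hgb x hx hxb.le]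
      have := mul_nonpos_of_nonneg_of_nonpos hpx hgx
      simp [hpy0]
      linarith
end

section
/- For every t ≠ 0 one has 0 < 2F̃(t) ≤ f̃(t)·t ≤ (V₀/k)t². -/
theorem stmt_4 (f phi ftilde : ℝ → ℝ) (C p θ V₀ k a α₀ δ : ℝ)
    (hf : ContDiff ℝ 2 f) (hodd : ∀ t : ℝ, f (-t) = -f t)
    (hf0 : f 0 = 0) (hf'0 : deriv f 0 = 0)
    (hC : 0 < C) (hp1 : 1 < p) (hp2 : p < 2)
    (hf'' : ∀ t : ℝ, |deriv (deriv f) t| ≤ C * |t| ^ (p - 1))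
    (hθ1 : 2 < θ) (hθ2 : θ < 6)
    (hAR : ∀ t : ℝ, t ≠ 0 →
      0 < θ * (∫ s in (0 : ℝ)..t, f s) ∧ θ * (∫ s in (0 : ℝ)..t, f s) ≤ t * f t)
    (hmono₁ : StrictMonoOn (fun t => f t / |t|) (Set.Iio (0 : ℝ)))
    (hmono₂ : StrictMonoOn (fun t => f t / |t|) (Set.Ioi (0 : ℝ)))
    (hV₀ : 0 < V₀) (hk : θ / (θ - 2) < k)
    (ha : 0 < a) (hα₀ : 0 < α₀) (hδ : 0 < δ)
    (ha' : f a / a = V₀ / k - δ)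
    (ha'' : f (a + 2 * α₀) / (a + 2 * α₀) = V₀ / k)
    (hphi : ContDiff ℝ (⊤ : ℕ∞) phi) (hphie : ∀ t : ℝ, phi (-t) = phi t)
    (hphi01 : ∀ t : ℝ, 0 ≤ phi t ∧ phi t ≤ 1)
    (hphimono : AntitoneOn phi (Set.Ici (0 : ℝ)))
    (hphi1 : ∀ t : ℝ, 0 ≤ t → t ≤ a + α₀ → phi t = 1)
    (hphi0 : ∀ t : ℝ, a + 2 * α₀ ≤ t → phi t = 0)
    (hft : ∀ t : ℝ, ftilde t = f t * phi t + (1 - phi t) * (V₀ / k) * t) :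
    ∀ t : ℝ, t ≠ 0 →
      0 < 2 * (∫ s in (0 : ℝ)..t, ftilde s) ∧
      2 * (∫ s in (0 : ℝ)..t, ftilde s) ≤ ftilde t * t ∧
      ftilde t * t ≤ (V₀ / k) * t ^ 2 := by
  set c := V₀ / k with hc
  have hθ2' : (0:ℝ) < θ - 2 := by linarith
  have hkpos : 0 < k := lt_trans (div_pos (by linarith) hθ2') hk
  have hc0 : 0 < c := div_pos hV₀ hkpos
  have hb : 0 < a + 2 * α₀ := by linarith
  -- f is positive on (0, ∞)
  have hfpos : ∀ t : ℝ, 0 < t → 0 < f t := by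
    intro t ht
    obtain ⟨h1, h2⟩ := hAR t (ne_of_gt ht)
    nlinarith
  -- f t / t ≤ c for 0 < t ≤ a + 2α₀
  have hfle : ∀ t : ℝ, 0 < t → t ≤ a + 2 * α₀ → f t / t ≤ c := by
    intro t ht hle
    rcases eq_or_lt_of_le hle with h | h
    · rw [h, ha'']
    · have h' := hmono₂ (Set.mem_Ioi.mpr ht) (Set.mem_Ioi.mpr hb) h
      simp only [abs_of_pos ht, abs_of_pos hb] at h'
      rw [ha''] at h'
      exact le_of_lt h'
  have hnn : ∀ t : ℝ, 0 < t → 0 ≤ phi t * (c - f t / t) := by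
    intro t ht
    rcases le_or_gt t (a + 2 * α₀) with h | h
    · exact mul_nonneg (hphi01 t).1 (sub_nonneg.2 (hfle t ht h))
    · rw [hphi0 t h.le]; simp
  have hfteq : ftilde = fun t => f t * phi t + (1 - phi t) * c * t := funext hft
  have hftc : Continuous ftilde := by
    rw [hfteq]
    exact ((hf.continuous.mul hphi.continuous).add
      (((continuous_const.sub hphi.continuous).mul continuous_const).mul continuous_id))
  have hftpos : ∀ t : ℝ, 0 < t → 0 < ftilde t := by
    intro t ht
    rw [hft]
    have h1 := (hphi01 t).1
    have h2 := (hphi01 t).2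
    have h3 := hfpos t ht
    rcases le_total (f t) (c * t) with h | h
    · nlinarith [mul_nonneg (sub_nonneg.2 h2) (sub_nonneg.2 h)]
    · nlinarith [mul_nonneg h1 (sub_nonneg.2 h), mul_pos hc0 ht]
  have hid : ∀ t : ℝ, 0 < t → ftilde t / t = c - phi t * (c - f t / t) := by
    intro t ht
    rw [hft]
    field_simp
    ring
  -- monotonicity of the defect
  have hmono : ∀ s t : ℝ, 0 < s → s ≤ t →
      phi t * (c - f t / t) ≤ phi s * (c - f s / s) := by
    intro s t hs hst
    have ht : 0 < t := lt_of_lt_of_le hs hst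
    rcases le_or_gt (a + 2 * α₀) t with h | h
    · rw [hphi0 t h]
      simpa using hnn s hs
    · have hsle : t ≤ a + 2 * α₀ := h.le
      have hphile : phi t ≤ phi s := hphimono (Set.mem_Ici.mpr hs.le) (Set.mem_Ici.mpr ht.le) hst
      have hfq : f s / s ≤ f t / t := by
        rcases eq_or_lt_of_le hst with h' | h'
        · rw [h']
        · have h'' := hmono₂ (Set.mem_Ioi.mpr hs) (Set.mem_Ioi.mpr ht) h'
          simp only [abs_of_pos hs, abs_of_pos ht] at h''
          exact le_of_lt h''
      have h1 : 0 ≤ c - f t / t := sub_nonneg.2 (hfle t ht hsle)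
      have h2 : 0 ≤ phi s := (hphi01 s).1
      have h3 : 0 ≤ phi t := (hphi01 t).1
      nlinarith
  -- third inequality for positive t
  have h3pos : ∀ t : ℝ, 0 < t → ftilde t * t ≤ c * t ^ 2 := by
    intro t ht
    have h1 := hnn t ht
    have h2 : ftilde t / t ≤ c := by rw [hid t ht]; linarith
    calc ftilde t * t = (ftilde t / t) * t ^ 2 := by field_simp
      _ ≤ c * t ^ 2 := by nlinarith [sq_nonneg t]
  -- second inequality for positive t
  have h2pos : ∀ t : ℝ, 0 < t → 2 * (∫ s in (0:ℝ)..t, ftilde s) ≤ ftilde t * t := by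
    intro t ht
    have hle : ∀ s ∈ Set.Icc (0:ℝ) t, ftilde s ≤ (ftilde t / t) * s := by
      intro s hs
      rcases eq_or_lt_of_le hs.1 with h0 | h0
      · rw [← h0, hft]
        simp [hf0]
      · have hq : ftilde s / s ≤ ftilde t / t := by
          rw [hid s h0, hid t ht]
          have := hmono s t h0 hs.2
          linarith
        calc ftilde s = (ftilde s / s) * s := by field_simp
          _ ≤ (ftilde t / t) * s := mul_le_mul_of_nonneg_right hq h0.le
    have hInt : (∫ s in (0:ℝ)..t, ftilde s) ≤ ∫ s in (0:ℝ)..t, (ftilde t / t) * s := by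
      apply intervalIntegral.integral_mono_on ht.le (hftc.intervalIntegrable _ _)
        ((continuous_const.mul continuous_id).intervalIntegrable _ _) hle
    have hval : (∫ s in (0:ℝ)..t, (ftilde t / t) * s) = (ftilde t / t) * (t ^ 2 / 2) := by
      rw [intervalIntegral.integral_const_mul, integral_id]
      ring
    have hfin : (ftilde t / t) * (t ^ 2 / 2) = ftilde t * t / 2 := by
      field_simp
    linarith [hInt, hval ▸ hInt]
  -- first inequality for positive t
  have h1pos : ∀ t : ℝ, 0 < t → 0 < ∫ s in (0:ℝ)..t, ftilde s := by
    intro t ht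
    exact intervalIntegral.intervalIntegral_pos_of_pos_on (hftc.intervalIntegrable _ _)
      (fun x hx => hftpos x hx.1) ht
  -- oddness of ftilde and evenness of the integral
  have hftodd : ∀ t : ℝ, ftilde (-t) = -ftilde t := by
    intro t
    rw [hft, hft, hodd, hphie]
    ring
  have hFeven : ∀ t : ℝ, (∫ s in (0:ℝ)..(-t), ftilde s) = ∫ s in (0:ℝ)..t, ftilde s := by
    intro t
    have h1 : (∫ s in (0:ℝ)..t, ftilde (-s)) = ∫ s in (-t)..(0:ℝ), ftilde s := by
      rw [intervalIntegral.integral_comp_neg (a := (0:ℝ)) (b := t) ftilde, neg_zero]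
    have h2 : (∫ s in (0:ℝ)..t, ftilde (-s)) = -∫ s in (0:ℝ)..t, ftilde s := by
      simp only [hftodd]
      exact intervalIntegral.integral_neg
    have h3 : (∫ s in (-t)..(0:ℝ), ftilde s) = -∫ s in (0:ℝ)..(-t), ftilde s :=
      intervalIntegral.integral_symm 0 (-t)
    linarith [h1, h2, h3]
  intro t ht
  rcases lt_trichotomy t 0 with hneg | hzero | hposi
  · have hpt : 0 < -t := by linarith
    have e1 : (∫ s in (0:ℝ)..t, ftilde s) = ∫ s in (0:ℝ)..(-t), ftilde s := by
      have := hFeven (-t)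
      rw [neg_neg] at this
      exact this
    have e2 : ftilde t * t = ftilde (-t) * (-t) := by
      rw [hftodd t]; ring
    have e3 : c * t ^ 2 = c * (-t) ^ 2 := by ring
    refine ⟨?_, ?_, ?_⟩
    · rw [e1]; linarith [h1pos (-t) hpt]
    · rw [e1, e2]; exact h2pos (-t) hpt
    · rw [e2, e3]; exact h3pos (-t) hpt
  · exact absurd hzero ht
  · exact ⟨by linarith [h1pos t hposi], h2pos t hposi, h3pos t hposi⟩
end

section
/- There exists C'' > 0 such that |f̃''(t)| ≤ C''|t|^{p−1} and |f̃'(t)| ≤ C''|t|^{p} for all t ∈ ℝ. -/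
open Set

private lemma aux_first_deriv_bound (f : ℝ → ℝ) (C p : ℝ) (hf : ContDiff ℝ 2 f) (hC : 0 < C)
    (hp1 : 1 < p) (hf'0 : deriv f 0 = 0)
    (hf'' : ∀ t : ℝ, |deriv (deriv f) t| ≤ C * |t| ^ (p - 1)) :
    ∀ t : ℝ, |deriv f t| ≤ C * |t| ^ p := by
  intro t
  rcases eq_or_ne t 0 with rfl | ht
  · simp [hf'0, Real.zero_rpow (by positivity : p ≠ 0)]
  · have htpos : 0 < |t| := abs_pos.mpr ht
    have hfd1 : ContDiff ℝ 1 (deriv f) :=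
      (contDiff_succ_iff_deriv.mp (show ContDiff ℝ (1+1) f by exact_mod_cast hf)).2.2
    have hfd' : Differentiable ℝ (deriv f) := hfd1.differentiable one_ne_zero
    have hconv : Convex ℝ (Icc (-|t|) |t|) := convex_Icc _ _
    have hb : ∀ x ∈ Icc (-|t|) |t|, ‖deriv (deriv f) x‖ ≤ C * |t| ^ (p-1) := by
      intro x hx
      have hxt : |x| ≤ |t| := abs_le.mpr ⟨hx.1, hx.2⟩
      calc ‖deriv (deriv f) x‖ ≤ C * |x| ^ (p-1) := hf'' x
        _ ≤ C * |t| ^ (p-1) := mul_le_mul_of_nonneg_left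
              (Real.rpow_le_rpow (abs_nonneg x) hxt (by linarith)) (le_of_lt hC)
    have key := hconv.norm_image_sub_le_of_norm_deriv_le (fun x _ => hfd' x) hb
      (show (0:ℝ) ∈ Icc (-|t|) |t| by constructor <;> simp [le_of_lt htpos] )
      (show t ∈ Icc (-|t|) |t| by constructor <;> [exact neg_abs_le t; exact le_abs_self t])
    rw [hf'0, sub_zero, sub_zero] at key
    calc |deriv f t| ≤ C * |t| ^ (p-1) * |t| := by simpa using key
      _ = C * |t| ^ p := by
          rw [mul_assoc, ← Real.rpow_add_one (ne_of_gt htpos) (p-1), sub_add_cancel]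

theorem stmt_6 (f phi ftilde : ℝ → ℝ) (C p θ V₀ k a α₀ δ : ℝ)
    (hf : ContDiff ℝ 2 f) (hodd : ∀ t : ℝ, f (-t) = -f t)
    (hf0 : f 0 = 0) (hf'0 : deriv f 0 = 0)
    (hC : 0 < C) (hp1 : 1 < p) (hp2 : p < 2)
    (hf'' : ∀ t : ℝ, |deriv (deriv f) t| ≤ C * |t| ^ (p - 1))
    (hθ1 : 2 < θ) (hθ2 : θ < 6)
    (hAR : ∀ t : ℝ, t ≠ 0 →
      0 < θ * (∫ s in (0 : ℝ)..t, f s) ∧ θ * (∫ s in (0 : ℝ)..t, f s) ≤ t * f t)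
    (hmono₁ : StrictMonoOn (fun t => f t / |t|) (Set.Iio (0 : ℝ)))
    (hmono₂ : StrictMonoOn (fun t => f t / |t|) (Set.Ioi (0 : ℝ)))
    (hV₀ : 0 < V₀) (hk : θ / (θ - 2) < k)
    (ha : 0 < a) (hα₀ : 0 < α₀) (hδ : 0 < δ)
    (ha' : f a / a = V₀ / k - δ)
    (ha'' : f (a + 2 * α₀) / (a + 2 * α₀) = V₀ / k)
    (hphi : ContDiff ℝ (⊤ : ℕ∞) phi) (hphie : ∀ t : ℝ, phi (-t) = phi t)
    (hphi01 : ∀ t : ℝ, 0 ≤ phi t ∧ phi t ≤ 1)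
    (hphimono : AntitoneOn phi (Set.Ici (0 : ℝ)))
    (hphi1 : ∀ t : ℝ, 0 ≤ t → t ≤ a + α₀ → phi t = 1)
    (hphi0 : ∀ t : ℝ, a + 2 * α₀ ≤ t → phi t = 0)
    (hft : ∀ t : ℝ, ftilde t = f t * phi t + (1 - phi t) * (V₀ / k) * t) :
    ∃ C'' : ℝ, 0 < C'' ∧ ∀ t : ℝ,
      |deriv (deriv ftilde) t| ≤ C'' * |t| ^ (p - 1) ∧
      |deriv ftilde t| ≤ C'' * |t| ^ p := by
  have hk0 : 0 < k := lt_trans (div_pos (by linarith) (by linarith)) hk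
  set m : ℝ := a + α₀ with hm_def
  set M : ℝ := a + 2 * α₀ with hM_def
  have hm : 0 < m := by positivity
  have hM : 0 < M := by positivity
  have hmM : m < M := by simp only [hm_def, hM_def]; linarith
  -- phi on symmetric sets
  have hphiA : ∀ t : ℝ, |t| ≤ m → phi t = 1 := by
    intro t h
    rcases le_or_gt 0 t with h0 | h0
    · exact hphi1 t h0 (le_trans (le_abs_self t) h)
    · rw [← hphie t]
      exact hphi1 (-t) (by linarith) (by rw [abs_of_neg h0] at h; linarith)
  have hphiB : ∀ t : ℝ, M ≤ |t| → phi t = 0 := by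
    intro t h
    rcases le_or_gt 0 t with h0 | h0
    · exact hphi0 t (by rw [abs_of_nonneg h0] at h; exact h)
    · rw [← hphie t]
      exact hphi0 (-t) (by rw [abs_of_neg h0] at h; linarith)
  -- open sets
  have hU1 : IsOpen {s : ℝ | |s| < m} := isOpen_lt continuous_abs continuous_const
  have hU2 : IsOpen {s : ℝ | M < |s|} := isOpen_lt continuous_const continuous_abs
  -- eventual equalities
  have hev1 : ∀ t : ℝ, |t| < m → ftilde =ᶠ[nhds t] f := by
    intro t h
    refine Filter.eventuallyEq_of_mem (hU1.mem_nhds h) (fun s hs => ?_)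
    rw [hft s, hphiA s (le_of_lt hs)]; ring
  have hev2 : ∀ t : ℝ, M < |t| → ftilde =ᶠ[nhds t] (fun s => V₀ / k * s) := by
    intro t h
    refine Filter.eventuallyEq_of_mem (hU2.mem_nhds h) (fun s hs => ?_)
    rw [hft s, hphiB s (le_of_lt hs)]; ring
  -- derivative formulas
  have hd1lin : deriv (fun s : ℝ => V₀ / k * s) = fun _ => V₀ / k := by
    funext s
    simpa using (((hasDerivAt_id s).const_mul (V₀ / k)).deriv)
  have hder1_near : ∀ t : ℝ, |t| < m → deriv ftilde t = deriv f t :=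
    fun t h => (hev1 t h).deriv_eq
  have hder2_near : ∀ t : ℝ, |t| < m →
      deriv (deriv ftilde) t = deriv (deriv f) t :=
    fun t h => ((hev1 t h).deriv).deriv_eq
  have hder1_far : ∀ t : ℝ, M < |t| → deriv ftilde t = V₀ / k := by
    intro t h
    rw [(hev2 t h).deriv_eq, hd1lin]
  have hder2_far : ∀ t : ℝ, M < |t| → deriv (deriv ftilde) t = 0 := by
    intro t h
    rw [((hev2 t h).deriv).deriv_eq, hd1lin]
    simp
  -- smoothness of ftilde
  have hfteq : ftilde = fun t => f t * phi t + (1 - phi t) * (V₀ / k) * t := funext hft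
  have hft2 : ContDiff ℝ 2 ftilde := by
    rw [hfteq]
    exact (hf.mul (hphi.of_le (WithTop.coe_le_coe.mpr (le_top : (2:ℕ∞) ≤ ⊤)))).add
      (((contDiff_const.sub (hphi.of_le (WithTop.coe_le_coe.mpr (le_top : (2:ℕ∞) ≤ ⊤)))).mul contDiff_const).mul contDiff_id)
  have hftd1 : ContDiff ℝ 1 (deriv ftilde) :=
    (contDiff_succ_iff_deriv.mp (show ContDiff ℝ (1+1) ftilde by exact_mod_cast hft2)).2.2
  have hcont1 : Continuous (deriv ftilde) := hftd1.continuous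
  have hcont2 : Continuous (deriv (deriv ftilde)) :=
    (contDiff_one_iff_deriv.mp hftd1).2
  -- compact bounds
  obtain ⟨K₁, hK₁⟩ := (isCompact_Icc (a := -M) (b := M)).exists_bound_of_continuousOn
    hcont1.continuousOn
  obtain ⟨K₂, hK₂⟩ := (isCompact_Icc (a := -M) (b := M)).exists_bound_of_continuousOn
    hcont2.continuousOn
  have hmp : (0:ℝ) < m ^ (p-1) := Real.rpow_pos_of_pos hm _
  have hmp' : (0:ℝ) < m ^ p := Real.rpow_pos_of_pos hm _
  have hMp : (0:ℝ) < M ^ p := Real.rpow_pos_of_pos hM _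
  have hVk : 0 < V₀ / k := div_pos hV₀ hk0
  have h1 : 0 ≤ max K₂ 0 / m ^ (p-1) := by positivity
  have h2 : 0 ≤ max K₁ 0 / m ^ p := by positivity
  have h3 : 0 ≤ (V₀ / k) / M ^ p := by positivity
  refine ⟨C + max K₂ 0 / m ^ (p-1) + max K₁ 0 / m ^ p + (V₀ / k) / M ^ p + 1,
    by linarith, fun t => ?_⟩
  set C'' : ℝ := C + max K₂ 0 / m ^ (p-1) + max K₁ 0 / m ^ p + (V₀ / k) / M ^ p + 1 with hC''
  have hC''pos : 0 < C'' := by rw [hC'']; linarith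
  have htp1 : (0:ℝ) ≤ |t| ^ (p-1) := Real.rpow_nonneg (abs_nonneg t) _
  have htp : (0:ℝ) ≤ |t| ^ p := Real.rpow_nonneg (abs_nonneg t) _
  constructor
  · -- second derivative
    rcases lt_or_ge |t| m with h | h
    · rw [hder2_near t h]
      calc |deriv (deriv f) t| ≤ C * |t| ^ (p-1) := hf'' t
        _ ≤ C'' * |t| ^ (p-1) := mul_le_mul_of_nonneg_right (by rw [hC'']; linarith) htp1
    · rcases le_or_gt |t| M with h' | h'
      · have hmem : t ∈ Icc (-M) M := ⟨neg_le_of_abs_le h', le_of_abs_le h'⟩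
        have hb : |deriv (deriv ftilde) t| ≤ max K₂ 0 :=
          le_trans (hK₂ t hmem) (le_max_left _ _)
        have e1 : m ^ (p-1) ≤ |t| ^ (p-1) :=
          Real.rpow_le_rpow (le_of_lt hm) h (by linarith)
        calc |deriv (deriv ftilde) t| ≤ max K₂ 0 := hb
          _ = (max K₂ 0 / m ^ (p-1)) * m ^ (p-1) := (div_mul_cancel₀ _ (ne_of_gt hmp)).symm
          _ ≤ C'' * |t| ^ (p-1) :=
            mul_le_mul (by rw [hC'']; linarith) e1 (le_of_lt hmp) (le_of_lt hC''pos)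
      · rw [hder2_far t h']
        simpa using mul_nonneg (le_of_lt hC''pos) htp1
  · -- first derivative
    rcases lt_or_ge |t| m with h | h
    · rw [hder1_near t h]
      calc |deriv f t| ≤ C * |t| ^ p :=
            aux_first_deriv_bound f C p hf hC hp1 hf'0 hf'' t
        _ ≤ C'' * |t| ^ p := mul_le_mul_of_nonneg_right (by rw [hC'']; linarith) htp
    · rcases le_or_gt |t| M with h' | h'
      · have hmem : t ∈ Icc (-M) M := ⟨neg_le_of_abs_le h', le_of_abs_le h'⟩
        have hb : |deriv ftilde t| ≤ max K₁ 0 :=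
          le_trans (hK₁ t hmem) (le_max_left _ _)
        have e1 : m ^ p ≤ |t| ^ p :=
          Real.rpow_le_rpow (le_of_lt hm) h (by linarith)
        calc |deriv ftilde t| ≤ max K₁ 0 := hb
          _ = (max K₁ 0 / m ^ p) * m ^ p := (div_mul_cancel₀ _ (ne_of_gt hmp')).symm
          _ ≤ C'' * |t| ^ p :=
            mul_le_mul (by rw [hC'']; linarith) e1 (le_of_lt hmp') (le_of_lt hC''pos)
      · rw [hder1_far t h']
        have e1 : M ^ p ≤ |t| ^ p :=
          Real.rpow_le_rpow (le_of_lt hM) (le_of_lt h') (by linarith)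
        calc |V₀ / k| = V₀ / k := abs_of_pos hVk
          _ = ((V₀ / k) / M ^ p) * M ^ p := (div_mul_cancel₀ _ (ne_of_gt hMp)).symm
          _ ≤ C'' * |t| ^ p :=
            mul_le_mul (by rw [hC'']; linarith) e1 (le_of_lt hMp) (le_of_lt hC''pos)
end

section
/- For every (x,y) ∈ ℝ² and every t ≥ 0 one has g(x,y,t) ≤ δ t + f(t); consequently G(x,y,t) ≤ (δ/2)t² + F(t) for all (x,y) ∈ ℝ² and t ∈ ℝ. -/
theorem stmt_7 (f phi ftilde : ℝ → ℝ) (chi : ℝ × ℝ → ℝ) (g : ℝ × ℝ → ℝ → ℝ)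
    (C p θ V₀ k a α₀ δ : ℝ)
    (hf : ContDiff ℝ 2 f) (hodd : ∀ t : ℝ, f (-t) = -f t)
    (hf0 : f 0 = 0) (hf'0 : deriv f 0 = 0)
    (hC : 0 < C) (hp1 : 1 < p) (hp2 : p < 2)
    (hf'' : ∀ t : ℝ, |deriv (deriv f) t| ≤ C * |t| ^ (p - 1))
    (hθ1 : 2 < θ) (hθ2 : θ < 6)
    (hAR : ∀ t : ℝ, t ≠ 0 →
      0 < θ * (∫ s in (0 : ℝ)..t, f s) ∧ θ * (∫ s in (0 : ℝ)..t, f s) ≤ t * f t)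
    (hmono₁ : StrictMonoOn (fun t => f t / |t|) (Set.Iio (0 : ℝ)))
    (hmono₂ : StrictMonoOn (fun t => f t / |t|) (Set.Ioi (0 : ℝ)))
    (hV₀ : 0 < V₀) (hk : θ / (θ - 2) < k)
    (ha : 0 < a) (hα₀ : 0 < α₀) (hδ : 0 < δ)
    (ha' : f a / a = V₀ / k - δ)
    (ha'' : f (a + 2 * α₀) / (a + 2 * α₀) = V₀ / k)
    (hphi : ContDiff ℝ (⊤ : ℕ∞) phi) (hphie : ∀ t : ℝ, phi (-t) = phi t)
    (hphi01 : ∀ t : ℝ, 0 ≤ phi t ∧ phi t ≤ 1)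
    (hphimono : AntitoneOn phi (Set.Ici (0 : ℝ)))
    (hphi1 : ∀ t : ℝ, 0 ≤ t → t ≤ a + α₀ → phi t = 1)
    (hphi0 : ∀ t : ℝ, a + 2 * α₀ ≤ t → phi t = 0)
    (hft : ∀ t : ℝ, ftilde t = f t * phi t + (1 - phi t) * (V₀ / k) * t)
    (hchi : ContDiff ℝ (⊤ : ℕ∞) chi) (hchisupp : HasCompactSupport chi)
    (hchi01 : ∀ z : ℝ × ℝ, 0 ≤ chi z ∧ chi z ≤ 1)
    (hg : ∀ (z : ℝ × ℝ) (t : ℝ), g z t = chi z * f t + (1 - chi z) * ftilde t) :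
    (∀ (z : ℝ × ℝ) (t : ℝ), 0 ≤ t → g z t ≤ δ * t + f t) ∧
    (∀ (z : ℝ × ℝ) (t : ℝ),
      (∫ s in (0 : ℝ)..t, g z s) ≤ (δ / 2) * t ^ 2 + ∫ s in (0 : ℝ)..t, f s) := by

  have hfc : Continuous f := hf.continuous
  have hphic : Continuous phi := hphi.continuous
  have hfte : ftilde = fun t => f t * phi t + (1 - phi t) * (V₀ / k) * t := funext hft
  have hftc : Continuous ftilde := by rw [hfte]; fun_prop
  have hgc : ∀ z, Continuous (g z) := by
    intro z
    have : g z = fun t => chi z * f t + (1 - chi z) * ftilde t := funext (hg z)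
    rw [this]; fun_prop
  have hmain : ∀ (z : ℝ × ℝ) (t : ℝ), 0 ≤ t → g z t ≤ δ * t + f t := by
    intro z t ht
    obtain ⟨hc0, hc1⟩ := hchi01 z
    obtain ⟨hq0, hq1⟩ := hphi01 t
    rw [hg, hft]
    rcases le_or_gt t (a + α₀) with hta | hta
    · rw [hphi1 t ht hta]
      have h0 : 0 ≤ δ * t := mul_nonneg hδ.le ht
      nlinarith
    · have htpos : 0 < t := by linarith
      have hmt : f a / |a| < f t / |t| :=
        hmono₂ (Set.mem_Ioi.mpr ha) (Set.mem_Ioi.mpr htpos) (by linarith)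
      rw [abs_of_pos ha, abs_of_pos htpos] at hmt
      have h2 : (V₀ / k - δ) < f t / t := by rw [← ha']; exact hmt
      have h3 : (V₀ / k - δ) * t < f t := (lt_div_iff₀ htpos).mp h2
      have hX : V₀ / k * t - f t < δ * t := by linarith
      rcases le_or_gt (V₀ / k * t - f t) 0 with hX0 | hX0
      · nlinarith [mul_nonneg (by linarith : (0:ℝ) ≤ 1 - chi z)
          (by linarith : (0:ℝ) ≤ 1 - phi t), mul_nonneg hδ.le ht]
      · have hpq : (1 - chi z) * (1 - phi t) ≤ 1 := by nlinarith
        have hpq0 : 0 ≤ (1 - chi z) * (1 - phi t) :=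
          mul_nonneg (by linarith) (by linarith)
        nlinarith [mul_le_mul_of_nonneg_right hpq hX0.le,
          mul_nonneg hpq0 hX0.le]
  refine ⟨hmain, ?_⟩
  have hint : ∀ (z : ℝ × ℝ) (t : ℝ), 0 ≤ t →
      (∫ s in (0 : ℝ)..t, g z s) ≤ (δ / 2) * t ^ 2 + ∫ s in (0 : ℝ)..t, f s := by
    intro z t ht
    have h1 : (∫ s in (0 : ℝ)..t, g z s) ≤ ∫ s in (0 : ℝ)..t, (δ * s + f s) := by
      apply intervalIntegral.integral_mono_on ht ((hgc z).intervalIntegrable _ _)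
        ((Continuous.intervalIntegrable (by fun_prop) _ _))
      intro s hs; exact hmain z s hs.1
    have h2 : (∫ s in (0 : ℝ)..t, (δ * s + f s))
        = (δ / 2) * t ^ 2 + ∫ s in (0 : ℝ)..t, f s := by
      rw [intervalIntegral.integral_add
        (Continuous.intervalIntegrable (by fun_prop) _ _)
        (hfc.intervalIntegrable _ _),
        intervalIntegral.integral_const_mul, integral_id]
      ring
    linarith
  have key : ∀ (h : ℝ → ℝ), (∀ s : ℝ, h (-s) = -h s) → ∀ u : ℝ,
      (∫ s in (0 : ℝ)..(-u), h s) = ∫ s in (0 : ℝ)..u, h s := by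
    intro h hh u
    have h1 : (∫ x in (0 : ℝ)..u, h (-x)) = ∫ x in (-u : ℝ)..(-0 : ℝ), h x :=
      intervalIntegral.integral_comp_neg (a := (0:ℝ)) (b := u) (f := h)
    have h2 : (∫ x in (0 : ℝ)..u, h (-x)) = ∫ x in (0 : ℝ)..u, (-h x) := by
      simp only [hh]
    rw [h2, intervalIntegral.integral_neg] at h1
    rw [show (-0 : ℝ) = 0 by ring] at h1
    rw [show (∫ x in (-u : ℝ)..(0:ℝ), h x) = -∫ x in (0 : ℝ)..(-u), h x from
      intervalIntegral.integral_symm _ _] at h1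
    linarith
  intro z t
  rcases le_or_gt 0 t with ht | ht
  · exact hint z t ht
  · have hgodd : ∀ s : ℝ, g z (-s) = -g z s := by
      intro s; rw [hg, hg, hft, hft, hodd, hphie]; ring
    have e1 : (∫ s in (0 : ℝ)..t, g z s) = ∫ s in (0 : ℝ)..(-t), g z s := by
      have := key (g z) hgodd (-t); rw [neg_neg] at this; exact this
    have e2 : (∫ s in (0 : ℝ)..t, f s) = ∫ s in (0 : ℝ)..(-t), f s := by
      have := key f hodd (-t); rw [neg_neg] at this; exact this
    rw [e1, e2]
    have := hint z (-t) (by linarith)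
    calc (∫ s in (0 : ℝ)..(-t), g z s)
        ≤ (δ / 2) * (-t) ^ 2 + ∫ s in (0 : ℝ)..(-t), f s := this
      _ = (δ / 2) * t ^ 2 + ∫ s in (0 : ℝ)..(-t), f s := by ring_nf
end

section
/- For every (x,y) ∈ ℝ² and every t ∈ ℝ one has (1/θ)·g(x,y,t)·t − G(x,y,t) ≥ −(V₀/(2k))·t². -/
set_option maxHeartbeats 1000000


theorem stmt_8 (f phi ftilde : ℝ → ℝ) (chi : ℝ × ℝ → ℝ) (g : ℝ × ℝ → ℝ → ℝ)
    (C p θ V₀ k a α₀ δ : ℝ)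
    (hf : ContDiff ℝ 2 f) (hodd : ∀ t : ℝ, f (-t) = -f t)
    (hf0 : f 0 = 0) (hf'0 : deriv f 0 = 0)
    (hC : 0 < C) (hp1 : 1 < p) (hp2 : p < 2)
    (hf'' : ∀ t : ℝ, |deriv (deriv f) t| ≤ C * |t| ^ (p - 1))
    (hθ1 : 2 < θ) (hθ2 : θ < 6)
    (hAR : ∀ t : ℝ, t ≠ 0 →
      0 < θ * (∫ s in (0 : ℝ)..t, f s) ∧ θ * (∫ s in (0 : ℝ)..t, f s) ≤ t * f t)
    (hmono₁ : StrictMonoOn (fun t => f t / |t|) (Set.Iio (0 : ℝ)))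
    (hmono₂ : StrictMonoOn (fun t => f t / |t|) (Set.Ioi (0 : ℝ)))
    (hV₀ : 0 < V₀) (hk : θ / (θ - 2) < k)
    (ha : 0 < a) (hα₀ : 0 < α₀) (hδ : 0 < δ)
    (ha' : f a / a = V₀ / k - δ)
    (ha'' : f (a + 2 * α₀) / (a + 2 * α₀) = V₀ / k)
    (hphi : ContDiff ℝ (⊤ : ℕ∞) phi) (hphie : ∀ t : ℝ, phi (-t) = phi t)
    (hphi01 : ∀ t : ℝ, 0 ≤ phi t ∧ phi t ≤ 1)
    (hphimono : AntitoneOn phi (Set.Ici (0 : ℝ)))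
    (hphi1 : ∀ t : ℝ, 0 ≤ t → t ≤ a + α₀ → phi t = 1)
    (hphi0 : ∀ t : ℝ, a + 2 * α₀ ≤ t → phi t = 0)
    (hft : ∀ t : ℝ, ftilde t = f t * phi t + (1 - phi t) * (V₀ / k) * t)
    (hchi : ContDiff ℝ (⊤ : ℕ∞) chi) (hchisupp : HasCompactSupport chi)
    (hchi01 : ∀ z : ℝ × ℝ, 0 ≤ chi z ∧ chi z ≤ 1)
    (hg : ∀ (z : ℝ × ℝ) (t : ℝ), g z t = chi z * f t + (1 - chi z) * ftilde t) :
    ∀ (z : ℝ × ℝ) (t : ℝ),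
      (1 / θ) * g z t * t - (∫ s in (0 : ℝ)..t, g z s) ≥ -(V₀ / (2 * k)) * t ^ 2 := by
  have hθ0 : (0:ℝ) < θ := by linarith
  have hk0 : (0:ℝ) < k := lt_trans (div_pos hθ0 (by linarith)) hk
  have hVk : (0:ℝ) < V₀ / k := div_pos hV₀ hk0
  have hb0 : (0:ℝ) < a + 2 * α₀ := by linarith
  -- continuity
  have hfc : Continuous f := hf.continuous
  have hftc : Continuous ftilde := by
    have : ftilde = fun t => f t * phi t + (1 - phi t) * (V₀ / k) * t := funext hft
    rw [this]
    exact ((hfc.mul hphi.continuous).add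
      (((continuous_const.sub hphi.continuous).mul continuous_const).mul continuous_id))
  have hlinc : Continuous (fun s : ℝ => V₀ / k * s) := continuous_const.mul continuous_id
  -- f positive on positives
  have hfpos : ∀ s : ℝ, 0 < s → 0 < f s := by
    intro s hs
    obtain ⟨h1, h2⟩ := hAR s (ne_of_gt hs)
    nlinarith
  -- f s ≤ V₀/k * s for 0 < s ≤ a + 2α₀
  have hfle : ∀ s : ℝ, 0 < s → s ≤ a + 2 * α₀ → f s ≤ V₀ / k * s := by
    intro s hs hsb
    have hdiv : f s / s ≤ V₀ / k := by
      rcases eq_or_lt_of_le hsb with heq | hlt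
      · rw [heq]; exact le_of_eq ha''
      · have := hmono₂ (Set.mem_Ioi.mpr hs) (Set.mem_Ioi.mpr hb0) hlt
        simp only [abs_of_pos hs, abs_of_pos hb0] at this
        rw [ha''] at this
        exact le_of_lt this
    calc f s = f s / s * s := by field_simp
    _ ≤ V₀ / k * s := by
        exact mul_le_mul_of_nonneg_right hdiv hs.le
  -- pointwise bounds on ftilde for s ≥ 0
  have claim_pos : ∀ s : ℝ, 0 ≤ s → 0 ≤ ftilde s ∧ ftilde s ≤ V₀ / k * s := by
    intro s hs
    rcases eq_or_lt_of_le hs with heq | hs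
    · subst heq
      have h0 : ftilde 0 = 0 := by rw [hft, hf0]; ring
      constructor <;> simp [h0]
    by_cases hsb : s ≤ a + 2 * α₀
    · obtain ⟨hp0, hp1'⟩ := hphi01 s
      have h1 := hfle s hs hsb
      have h2 := hfpos s hs
      constructor
      · rw [hft]
        have := mul_nonneg (mul_nonneg (by linarith : (0:ℝ) ≤ 1 - phi s) hVk.le) hs.le
        nlinarith
      · rw [hft]
        nlinarith [mul_le_mul_of_nonneg_right h1 hp0]
    · have h0 : phi s = 0 := hphi0 s (by linarith)
      have : ftilde s = V₀ / k * s := by rw [hft, h0]; ring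
      rw [this]
      constructor
      · positivity
      · exact le_refl _
  have hoddft : ∀ t : ℝ, ftilde (-t) = -ftilde t := by
    intro t
    rw [hft, hft, hodd, hphie]; ring
  have claim_neg : ∀ s : ℝ, s ≤ 0 → V₀ / k * s ≤ ftilde s ∧ ftilde s ≤ 0 := by
    intro s hs
    obtain ⟨h1, h2⟩ := claim_pos (-s) (by linarith)
    have h3 : ftilde (-s) = -ftilde s := hoddft s
    constructor <;> nlinarith
  -- F̃ bound
  have hFt : ∀ t : ℝ, (∫ s in (0:ℝ)..t, ftilde s) ≤ V₀ / (2 * k) * t ^ 2 := by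
    intro t
    rcases le_or_gt 0 t with ht | ht
    · have hmono := intervalIntegral.integral_mono_on (μ := MeasureTheory.volume) ht
        (hftc.intervalIntegrable 0 t) (hlinc.intervalIntegrable 0 t)
        (fun s hs => (claim_pos s hs.1).2)
      have hval : (∫ s in (0:ℝ)..t, V₀ / k * s) = V₀ / (2 * k) * t ^ 2 := by
        rw [intervalIntegral.integral_const_mul, integral_id]
        ring
      linarith [hmono, le_of_eq hval]
    · have hsym : (∫ s in (0:ℝ)..t, ftilde s) = -(∫ s in t..(0:ℝ), ftilde s) :=
        intervalIntegral.integral_symm t 0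
      have hmono := intervalIntegral.integral_mono_on (μ := MeasureTheory.volume) (le_of_lt ht)
        (hlinc.intervalIntegrable t 0) (hftc.intervalIntegrable t 0)
        (fun s hs => (claim_neg s hs.2).1)
      have hval : (∫ s in t..(0:ℝ), V₀ / k * s) = -(V₀ / (2 * k) * t ^ 2) := by
        rw [intervalIntegral.integral_const_mul, integral_id]
        ring
      rw [hsym]
      rw [hval] at hmono
      linarith
  -- ftilde t * t ≥ 0
  have hftt : ∀ t : ℝ, 0 ≤ ftilde t * t := by
    intro t
    rcases le_or_gt 0 t with ht | ht
    · exact mul_nonneg (claim_pos t ht).1 ht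
    · have h := (claim_neg t ht.le).2
      nlinarith
  -- AR consequence
  have hAR' : ∀ t : ℝ, 0 ≤ 1 / θ * f t * t - ∫ s in (0:ℝ)..t, f s := by
    intro t
    by_cases h : t = 0
    · subst h; simp [hf0]
    · obtain ⟨h1, h2⟩ := hAR t h
      have key : (∫ s in (0:ℝ)..t, f s) ≤ t * f t / θ := (le_div_iff₀' hθ0).mpr h2
      have : t * f t / θ = 1 / θ * f t * t := by ring
      linarith
  -- decomposition of G
  intro z t
  have hGdec : (∫ s in (0:ℝ)..t, g z s) =
      chi z * (∫ s in (0:ℝ)..t, f s) + (1 - chi z) * (∫ s in (0:ℝ)..t, ftilde s) := by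
    have h1 : (∫ s in (0:ℝ)..t, g z s)
        = ∫ s in (0:ℝ)..t, (chi z * f s + (1 - chi z) * ftilde s) :=
      intervalIntegral.integral_congr (fun s _ => hg z s)
    rw [h1, intervalIntegral.integral_add (f := fun s => chi z * f s) (g := fun s => (1 - chi z) * ftilde s)
      ((continuous_const.mul hfc).intervalIntegrable 0 t)
      ((continuous_const.mul hftc).intervalIntegrable 0 t),
      intervalIntegral.integral_const_mul, intervalIntegral.integral_const_mul]
  rw [hGdec, hg z t]
  obtain ⟨hc0, hc1⟩ := hchi01 z
  have hA := hAR' t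
  have hB : -(V₀ / (2 * k) * t ^ 2) ≤ 1 / θ * ftilde t * t - ∫ s in (0:ℝ)..t, ftilde s := by
    have h1 : 0 ≤ 1 / θ * ftilde t * t := by
      have := hftt t
      have h2 : 0 < 1 / θ := by positivity
      nlinarith
    have := hFt t
    linarith
  have hd : 0 ≤ V₀ / (2 * k) * t ^ 2 := by positivity
  have e1 : 0 ≤ chi z * (1 / θ * f t * t - ∫ s in (0:ℝ)..t, f s) := mul_nonneg hc0 hA
  have e2 : (1 - chi z) * (-(V₀ / (2 * k) * t ^ 2)) ≤
      (1 - chi z) * (1 / θ * ftilde t * t - ∫ s in (0:ℝ)..t, ftilde s) :=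
    mul_le_mul_of_nonneg_left hB (by linarith)
  have e3 : -(V₀ / (2 * k) * t ^ 2) ≤ (1 - chi z) * (-(V₀ / (2 * k) * t ^ 2)) := by
    nlinarith
  nlinarith [e1, e2, e3]
end

section
/- For every (x,y) ∈ ℝ², every real W ≥ V₀ and every t ∈ ℝ one has (1−χ(x,y))·((1/2)W t² − F̃(t)) ≥ (1−χ(x,y))·((k−1)/(2k))·W t² ≥ 0. -/
theorem stmt_9 (f phi ftilde : ℝ → ℝ) (chi : ℝ × ℝ → ℝ) (g : ℝ × ℝ → ℝ → ℝ)
    (C p θ V₀ k a α₀ δ : ℝ)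
    (hf : ContDiff ℝ 2 f) (hodd : ∀ t : ℝ, f (-t) = -f t)
    (hf0 : f 0 = 0) (hf'0 : deriv f 0 = 0)
    (hC : 0 < C) (hp1 : 1 < p) (hp2 : p < 2)
    (hf'' : ∀ t : ℝ, |deriv (deriv f) t| ≤ C * |t| ^ (p - 1))
    (hθ1 : 2 < θ) (hθ2 : θ < 6)
    (hAR : ∀ t : ℝ, t ≠ 0 →
      0 < θ * (∫ s in (0 : ℝ)..t, f s) ∧ θ * (∫ s in (0 : ℝ)..t, f s) ≤ t * f t)
    (hmono₁ : StrictMonoOn (fun t => f t / |t|) (Set.Iio (0 : ℝ)))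
    (hmono₂ : StrictMonoOn (fun t => f t / |t|) (Set.Ioi (0 : ℝ)))
    (hV₀ : 0 < V₀) (hk : θ / (θ - 2) < k)
    (ha : 0 < a) (hα₀ : 0 < α₀) (hδ : 0 < δ)
    (ha' : f a / a = V₀ / k - δ)
    (ha'' : f (a + 2 * α₀) / (a + 2 * α₀) = V₀ / k)
    (hphi : ContDiff ℝ (⊤ : ℕ∞) phi) (hphie : ∀ t : ℝ, phi (-t) = phi t)
    (hphi01 : ∀ t : ℝ, 0 ≤ phi t ∧ phi t ≤ 1)
    (hphimono : AntitoneOn phi (Set.Ici (0 : ℝ)))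
    (hphi1 : ∀ t : ℝ, 0 ≤ t → t ≤ a + α₀ → phi t = 1)
    (hphi0 : ∀ t : ℝ, a + 2 * α₀ ≤ t → phi t = 0)
    (hft : ∀ t : ℝ, ftilde t = f t * phi t + (1 - phi t) * (V₀ / k) * t)
    (hchi : ContDiff ℝ (⊤ : ℕ∞) chi) (hchisupp : HasCompactSupport chi)
    (hchi01 : ∀ z : ℝ × ℝ, 0 ≤ chi z ∧ chi z ≤ 1)
    (hg : ∀ (z : ℝ × ℝ) (t : ℝ), g z t = chi z * f t + (1 - chi z) * ftilde t) :
    ∀ (z : ℝ × ℝ) (W : ℝ), V₀ ≤ W → ∀ t : ℝ,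
      (1 - chi z) * ((1 / 2) * W * t ^ 2 - ∫ s in (0 : ℝ)..t, ftilde s) ≥
        (1 - chi z) * ((k - 1) / (2 * k)) * W * t ^ 2 ∧
      (1 - chi z) * ((k - 1) / (2 * k)) * W * t ^ 2 ≥ 0 := by

  -- basic facts about k
  have hθ2' : 0 < θ - 2 := by linarith
  have hk1 : 1 < k := by
    have h1 : (1 : ℝ) < θ / (θ - 2) := (one_lt_div hθ2').mpr (by linarith)
    linarith
  have hk0 : 0 < k := by linarith
  -- continuity of ftilde
  have hfte : ftilde = fun t => f t * phi t + (1 - phi t) * (V₀ / k) * t := funext hft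
  have hcont : Continuous ftilde := by
    rw [hfte]
    exact ((hf.continuous.mul hphi.continuous).add
      (((continuous_const.sub hphi.continuous).mul continuous_const).mul continuous_id))
  -- pointwise bound for s ≥ 0
  have hpt : ∀ s : ℝ, 0 ≤ s → ftilde s ≤ V₀ / k * s := by
    intro s hs
    rcases eq_or_lt_of_le hs with h0 | h0
    · rw [hft, ← h0, hf0]; norm_num
    · rcases lt_or_ge s (a + 2 * α₀) with hcase | hcase
      · have hmem : s ∈ Set.Ioi (0:ℝ) := h0
        have hmem2 : (a + 2 * α₀) ∈ Set.Ioi (0:ℝ) := by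
          simp only [Set.mem_Ioi]; linarith
        have := hmono₂ hmem hmem2 hcase
        simp only at this
        rw [abs_of_pos h0, abs_of_pos (by linarith : (0:ℝ) < a + 2 * α₀), ha''] at this
        have hfs : f s ≤ V₀ / k * s := by
          have := (div_lt_iff₀ h0).mp this
          linarith
        rw [hft]
        nlinarith [mul_nonneg (sub_nonneg.mpr hfs) (hphi01 s).1, (hphi01 s).2]
      · rw [hft, hphi0 s hcase]; norm_num
  -- integral bound for t ≥ 0
  have hint : ∀ t : ℝ, 0 ≤ t → (∫ s in (0:ℝ)..t, ftilde s) ≤ V₀ / (2 * k) * t ^ 2 := by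
    intro t ht
    have h1 : (∫ s in (0:ℝ)..t, ftilde s) ≤ ∫ s in (0:ℝ)..t, V₀ / k * s := by
      apply intervalIntegral.integral_mono_on ht
        (hcont.intervalIntegrable 0 t)
        ((continuous_const.mul continuous_id).intervalIntegrable 0 t)
      intro s hs
      exact hpt s hs.1
    have h2 : (∫ s in (0:ℝ)..t, V₀ / k * s) = V₀ / (2 * k) * t ^ 2 := by
      rw [intervalIntegral.integral_const_mul, integral_id]
      ring
    linarith
  -- oddness of ftilde
  have hoddft : ∀ s : ℝ, ftilde (-s) = -ftilde s := by
    intro s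
    rw [hft, hft, hodd, hphie]
    ring
  -- integral bound for all t
  have key : ∀ t : ℝ, (∫ s in (0:ℝ)..t, ftilde s) ≤ V₀ / (2 * k) * t ^ 2 := by
    intro t
    rcases le_or_gt 0 t with ht | ht
    · exact hint t ht
    · have h1 : (∫ x in (0:ℝ)..(-t), ftilde (-x)) = ∫ x in t..(0:ℝ), ftilde x := by
        simpa using intervalIntegral.integral_comp_neg (a := (0:ℝ)) (b := -t) ftilde
      have h2 : (∫ x in (0:ℝ)..(-t), ftilde (-x)) = -∫ x in (0:ℝ)..(-t), ftilde x := by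
        simp_rw [hoddft]
        exact intervalIntegral.integral_neg
      have h3 : (∫ x in t..(0:ℝ), ftilde x) = -∫ x in (0:ℝ)..t, ftilde x :=
        intervalIntegral.integral_symm 0 t
      have heq : (∫ s in (0:ℝ)..t, ftilde s) = ∫ s in (0:ℝ)..(-t), ftilde s := by
        linarith
      rw [heq]
      have := hint (-t) (by linarith)
      calc (∫ s in (0:ℝ)..(-t), ftilde s) ≤ V₀ / (2 * k) * (-t) ^ 2 := this
        _ = V₀ / (2 * k) * t ^ 2 := by ring
  intro z W hW t
  have hχ : 0 ≤ 1 - chi z := by linarith [(hchi01 z).2]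
  have hW0 : 0 < W := lt_of_lt_of_le hV₀ hW
  have hIk : (∫ s in (0:ℝ)..t, ftilde s) ≤ W / (2 * k) * t ^ 2 := by
    calc (∫ s in (0:ℝ)..t, ftilde s) ≤ V₀ / (2 * k) * t ^ 2 := key t
      _ ≤ W / (2 * k) * t ^ 2 := by gcongr
  have hsplit : (k - 1) / (2 * k) * W * t ^ 2 = (1 / 2) * W * t ^ 2 - W / (2 * k) * t ^ 2 := by
    field_simp
  have hinner : (k - 1) / (2 * k) * W * t ^ 2 ≤
      (1 / 2) * W * t ^ 2 - ∫ s in (0:ℝ)..t, ftilde s := by linarith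
  constructor
  · rw [ge_iff_le]
    have := mul_le_mul_of_nonneg_left hinner hχ
    linarith [this]
  · rw [ge_iff_le]
    have hd : 0 ≤ (k - 1) / (2 * k) := div_nonneg (by linarith) (by linarith)
    have := mul_nonneg (mul_nonneg (mul_nonneg hχ hd) (le_of_lt hW0)) (sq_nonneg t)
    calc (0:ℝ) ≤ ((1 - chi z) * ((k-1)/(2*k)) * W) * t^2 := by positivity
      _ = (1 - chi z) * ((k-1)/(2*k)) * W * t ^ 2 := by ring
end

section
/- For every (x,y) ∈ ℝ², every real W ≥ V₀ and every t ∈ ℝ one has (1−χ(x,y))·(W t² − f̃(t)·t) ≥ (1−χ(x,y))·(1−1/k)·W t² ≥ 0. -/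
theorem stmt_10 (f phi ftilde : ℝ → ℝ) (chi : ℝ × ℝ → ℝ) (g : ℝ × ℝ → ℝ → ℝ)
    (C p θ V₀ k a α₀ δ : ℝ)
    (hf : ContDiff ℝ 2 f) (hodd : ∀ t : ℝ, f (-t) = -f t)
    (hf0 : f 0 = 0) (hf'0 : deriv f 0 = 0)
    (hC : 0 < C) (hp1 : 1 < p) (hp2 : p < 2)
    (hf'' : ∀ t : ℝ, |deriv (deriv f) t| ≤ C * |t| ^ (p - 1))
    (hθ1 : 2 < θ) (hθ2 : θ < 6)
    (hAR : ∀ t : ℝ, t ≠ 0 →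
      0 < θ * (∫ s in (0 : ℝ)..t, f s) ∧ θ * (∫ s in (0 : ℝ)..t, f s) ≤ t * f t)
    (hmono₁ : StrictMonoOn (fun t => f t / |t|) (Set.Iio (0 : ℝ)))
    (hmono₂ : StrictMonoOn (fun t => f t / |t|) (Set.Ioi (0 : ℝ)))
    (hV₀ : 0 < V₀) (hk : θ / (θ - 2) < k)
    (ha : 0 < a) (hα₀ : 0 < α₀) (hδ : 0 < δ)
    (ha' : f a / a = V₀ / k - δ)
    (ha'' : f (a + 2 * α₀) / (a + 2 * α₀) = V₀ / k)
    (hphi : ContDiff ℝ (⊤ : ℕ∞) phi) (hphie : ∀ t : ℝ, phi (-t) = phi t)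
    (hphi01 : ∀ t : ℝ, 0 ≤ phi t ∧ phi t ≤ 1)
    (hphimono : AntitoneOn phi (Set.Ici (0 : ℝ)))
    (hphi1 : ∀ t : ℝ, 0 ≤ t → t ≤ a + α₀ → phi t = 1)
    (hphi0 : ∀ t : ℝ, a + 2 * α₀ ≤ t → phi t = 0)
    (hft : ∀ t : ℝ, ftilde t = f t * phi t + (1 - phi t) * (V₀ / k) * t)
    (hchi : ContDiff ℝ (⊤ : ℕ∞) chi) (hchisupp : HasCompactSupport chi)
    (hchi01 : ∀ z : ℝ × ℝ, 0 ≤ chi z ∧ chi z ≤ 1)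
    (hg : ∀ (z : ℝ × ℝ) (t : ℝ), g z t = chi z * f t + (1 - chi z) * ftilde t) :
    ∀ (z : ℝ × ℝ) (W : ℝ), V₀ ≤ W → ∀ t : ℝ,
      (1 - chi z) * (W * t ^ 2 - ftilde t * t) ≥
        (1 - chi z) * (1 - 1 / k) * W * t ^ 2 ∧
      (1 - chi z) * (1 - 1 / k) * W * t ^ 2 ≥ 0 := by
  have hθ0 : 0 < θ - 2 := by linarith
  have hk1 : 1 < k := by
    have : 1 < θ / (θ - 2) := (one_lt_div hθ0).mpr (by linarith)
    linarith
  have hk0 : 0 < k := by linarith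
  -- for positive s in (0, a+2α₀], f s * s ≤ V₀/k * s^2
  have aux : ∀ s : ℝ, 0 < s → s ≤ a + 2 * α₀ → f s * s ≤ V₀ / k * s ^ 2 := by
    intro s hs hs'
    have hb : (0:ℝ) < a + 2 * α₀ := by linarith
    have hratio : f s / s ≤ V₀ / k := by
      rcases eq_or_lt_of_le hs' with h | h
      · rw [h]; exact le_of_eq ha''
      · have := hmono₂ (Set.mem_Ioi.mpr hs) (Set.mem_Ioi.mpr hb) h
        simp only [abs_of_pos hs, abs_of_pos hb] at this
        rw [ha''] at this
        exact this.le
    have h1 : f s ≤ V₀ / k * s := (div_le_iff₀ hs).mp hratio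
    nlinarith
  have key : ∀ t : ℝ, f t * t ≤ V₀ / k * t ^ 2 ∨ phi t = 0 := by
    intro t
    rcases lt_trichotomy t 0 with ht | ht | ht
    · by_cases h : -t ≤ a + 2 * α₀
      · left
        have := aux (-t) (by linarith) h
        have he := hodd t
        simp only [he] at this
        nlinarith
      · right
        rw [← hphie t]
        exact hphi0 (-t) (by linarith)
    · left; simp [ht, hf0]
    · by_cases h : t ≤ a + 2 * α₀
      · left; exact aux t ht h
      · right; exact hphi0 t (by linarith)
  have key2 : ∀ t : ℝ, ftilde t * t ≤ V₀ / k * t ^ 2 := by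
    intro t
    rw [hft]
    have h0 := (hphi01 t).1
    have h1 := (hphi01 t).2
    rcases key t with h | h
    · nlinarith [mul_nonneg h0 (sub_nonneg.mpr h)]
    · rw [h]; ring_nf; nlinarith [sq_nonneg t]
  intro z W hW t
  have hc1 : 0 ≤ 1 - chi z := by linarith [(hchi01 z).2]
  have hc2 : (0:ℝ) ≤ 1 - 1 / k := by
    rw [sub_nonneg, div_le_one hk0]; linarith
  have hW0 : 0 ≤ W := le_trans hV₀.le hW
  constructor
  · have hVk : V₀ / k * t ^ 2 ≤ W / k * t ^ 2 := by
      gcongr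
    have hinner : (1 - 1 / k) * W * t ^ 2 ≤ W * t ^ 2 - ftilde t * t := by
      have e : (1 - 1 / k) * W * t ^ 2 = W * t ^ 2 - W / k * t ^ 2 := by ring
      linarith [key2 t]
    nlinarith [mul_nonneg hc1 (sub_nonneg.mpr hinner)]
  · exact mul_nonneg (mul_nonneg (mul_nonneg hc1 hc2) hW0) (sq_nonneg t)
end

section
/- For every (x,y) ∈ ℝ², the map t ↦ g(x,y,t)/t is nondecreasing on (0,∞); it is strictly increasing on (0,∞) whenever χ(x,y) > 0, and when χ(x,y) = 0 it is strictly increasing on (0, a+α₀). -/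
theorem stmt_11 (f phi ftilde : ℝ → ℝ) (chi : ℝ × ℝ → ℝ) (g : ℝ × ℝ → ℝ → ℝ)
    (C p θ V₀ k a α₀ δ : ℝ)
    (hf : ContDiff ℝ 2 f) (hodd : ∀ t : ℝ, f (-t) = -f t)
    (hf0 : f 0 = 0) (hf'0 : deriv f 0 = 0)
    (hC : 0 < C) (hp1 : 1 < p) (hp2 : p < 2)
    (hf'' : ∀ t : ℝ, |deriv (deriv f) t| ≤ C * |t| ^ (p - 1))
    (hθ1 : 2 < θ) (hθ2 : θ < 6)
    (hAR : ∀ t : ℝ, t ≠ 0 →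
      0 < θ * (∫ s in (0 : ℝ)..t, f s) ∧ θ * (∫ s in (0 : ℝ)..t, f s) ≤ t * f t)
    (hmono₁ : StrictMonoOn (fun t => f t / |t|) (Set.Iio (0 : ℝ)))
    (hmono₂ : StrictMonoOn (fun t => f t / |t|) (Set.Ioi (0 : ℝ)))
    (hV₀ : 0 < V₀) (hk : θ / (θ - 2) < k)
    (ha : 0 < a) (hα₀ : 0 < α₀) (hδ : 0 < δ)
    (ha' : f a / a = V₀ / k - δ)
    (ha'' : f (a + 2 * α₀) / (a + 2 * α₀) = V₀ / k)
    (hphi : ContDiff ℝ (⊤ : ℕ∞) phi) (hphie : ∀ t : ℝ, phi (-t) = phi t)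
    (hphi01 : ∀ t : ℝ, 0 ≤ phi t ∧ phi t ≤ 1)
    (hphimono : AntitoneOn phi (Set.Ici (0 : ℝ)))
    (hphi1 : ∀ t : ℝ, 0 ≤ t → t ≤ a + α₀ → phi t = 1)
    (hphi0 : ∀ t : ℝ, a + 2 * α₀ ≤ t → phi t = 0)
    (hft : ∀ t : ℝ, ftilde t = f t * phi t + (1 - phi t) * (V₀ / k) * t)
    (hchi : ContDiff ℝ (⊤ : ℕ∞) chi) (hchisupp : HasCompactSupport chi)
    (hchi01 : ∀ z : ℝ × ℝ, 0 ≤ chi z ∧ chi z ≤ 1)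
    (hg : ∀ (z : ℝ × ℝ) (t : ℝ), g z t = chi z * f t + (1 - chi z) * ftilde t) :
    ∀ z : ℝ × ℝ,
      MonotoneOn (fun t => g z t / t) (Set.Ioi (0 : ℝ)) ∧
      (0 < chi z → StrictMonoOn (fun t => g z t / t) (Set.Ioi (0 : ℝ))) ∧
      (chi z = 0 → StrictMonoOn (fun t => g z t / t) (Set.Ioo (0 : ℝ) (a + α₀))) := by

  have hm : ∀ s t : ℝ, 0 < s → s < t → f s / s < f t / t := by
    intro s t hs hst
    have ht : 0 < t := hs.trans hst
    have := hmono₂ (Set.mem_Ioi.2 hs) (Set.mem_Ioi.2 ht) hst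
    simpa [abs_of_pos hs, abs_of_pos ht] using this
  have hB : ∀ t : ℝ, 0 < t → t ≤ a + 2 * α₀ → f t / t ≤ V₀ / k := by
    intro t ht hle
    rcases lt_or_eq_of_le hle with hlt | heq
    · have := hm t (a + 2 * α₀) ht hlt
      rw [ha''] at this; exact this.le
    · rw [heq, ha'']
  have hH : ∀ t : ℝ, 0 < t → ftilde t / t = V₀ / k - phi t * (V₀ / k - f t / t) := by
    intro t ht
    rw [hft]
    field_simp
    ring
  have hAmono : ∀ s t : ℝ, 0 < s → s < t →
      phi t * (V₀ / k - f t / t) ≤ phi s * (V₀ / k - f s / s) := by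
    intro s t hs hst
    have ht : 0 < t := hs.trans hst
    by_cases hta : t < a + 2 * α₀
    · have h1 : phi t ≤ phi s :=
        hphimono (Set.mem_Ici.2 hs.le) (Set.mem_Ici.2 ht.le) hst.le
      have h2 : f s / s < f t / t := hm s t hs hst
      have h3 : f t / t ≤ V₀ / k := hB t ht hta.le
      exact mul_le_mul h1 (by linarith) (by linarith) (hphi01 s).1
    · rw [hphi0 t (not_lt.1 hta), zero_mul]
      by_cases hsa : s ≤ a + 2 * α₀
      · have := hB s hs hsa
        exact mul_nonneg (hphi01 s).1 (by linarith)
      · rw [hphi0 s (not_le.1 hsa).le, zero_mul]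
  have hHmono : ∀ s t : ℝ, 0 < s → s < t → ftilde s / s ≤ ftilde t / t := by
    intro s t hs hst
    have ht : 0 < t := hs.trans hst
    rw [hH s hs, hH t ht]
    linarith [hAmono s t hs hst]
  have hHeq : ∀ t : ℝ, 0 < t → t ≤ a + α₀ → ftilde t / t = f t / t := by
    intro t ht hle
    rw [hH t ht, hphi1 t ht.le hle]
    ring
  intro z
  obtain ⟨hc0, hc1⟩ := hchi01 z
  have hgz : ∀ t : ℝ, g z t / t = chi z * (f t / t) + (1 - chi z) * (ftilde t / t) := by
    intro t
    rw [hg z t, add_div, mul_div_assoc, mul_div_assoc]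
  refine ⟨?_, ?_, ?_⟩
  · intro s hs t ht hst
    rcases eq_or_lt_of_le hst with rfl | hlt
    · exact le_rfl
    · simp only [hgz]
      exact add_le_add
        (mul_le_mul_of_nonneg_left (hm s t (Set.mem_Ioi.1 hs) hlt).le hc0)
        (mul_le_mul_of_nonneg_left (hHmono s t (Set.mem_Ioi.1 hs) hlt) (by linarith))
  · intro hcpos s hs t ht hst
    simp only [hgz]
    exact add_lt_add_of_lt_of_le
      (mul_lt_mul_of_pos_left (hm s t (Set.mem_Ioi.1 hs) hst) hcpos)
      (mul_le_mul_of_nonneg_left (hHmono s t (Set.mem_Ioi.1 hs) hst) (by linarith))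
  · intro hc s hs t ht hst
    obtain ⟨hs0, hsa⟩ := hs
    obtain ⟨ht0, hta⟩ := ht
    simp only [hgz, hc, zero_mul, zero_add, sub_zero, one_mul]
    rw [hHeq s hs0 hsa.le, hHeq t ht0 hta.le]
    exact hm s t hs0 hst
end

section
/- For every ζ > 0 there exists C_ζ > 0 such that G(x,y,t) ≤ ((δ+ζ)/2)·t² + C_ζ·|t|^{p+2} for all (x,y) ∈ ℝ² and all t ∈ ℝ. -/
theorem stmt_12 (f phi ftilde : ℝ → ℝ) (chi : ℝ × ℝ → ℝ) (g : ℝ × ℝ → ℝ → ℝ)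
    (C p θ V₀ k a α₀ δ : ℝ)
    (hf : ContDiff ℝ 2 f) (hodd : ∀ t : ℝ, f (-t) = -f t)
    (hf0 : f 0 = 0) (hf'0 : deriv f 0 = 0)
    (hC : 0 < C) (hp1 : 1 < p) (hp2 : p < 2)
    (hf'' : ∀ t : ℝ, |deriv (deriv f) t| ≤ C * |t| ^ (p - 1))
    (hθ1 : 2 < θ) (hθ2 : θ < 6)
    (hAR : ∀ t : ℝ, t ≠ 0 →
      0 < θ * (∫ s in (0 : ℝ)..t, f s) ∧ θ * (∫ s in (0 : ℝ)..t, f s) ≤ t * f t)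
    (hmono₁ : StrictMonoOn (fun t => f t / |t|) (Set.Iio (0 : ℝ)))
    (hmono₂ : StrictMonoOn (fun t => f t / |t|) (Set.Ioi (0 : ℝ)))
    (hV₀ : 0 < V₀) (hk : θ / (θ - 2) < k)
    (ha : 0 < a) (hα₀ : 0 < α₀) (hδ : 0 < δ)
    (ha' : f a / a = V₀ / k - δ)
    (ha'' : f (a + 2 * α₀) / (a + 2 * α₀) = V₀ / k)
    (hphi : ContDiff ℝ (⊤ : ℕ∞) phi) (hphie : ∀ t : ℝ, phi (-t) = phi t)
    (hphi01 : ∀ t : ℝ, 0 ≤ phi t ∧ phi t ≤ 1)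
    (hphimono : AntitoneOn phi (Set.Ici (0 : ℝ)))
    (hphi1 : ∀ t : ℝ, 0 ≤ t → t ≤ a + α₀ → phi t = 1)
    (hphi0 : ∀ t : ℝ, a + 2 * α₀ ≤ t → phi t = 0)
    (hft : ∀ t : ℝ, ftilde t = f t * phi t + (1 - phi t) * (V₀ / k) * t)
    (hchi : ContDiff ℝ (⊤ : ℕ∞) chi) (hchisupp : HasCompactSupport chi)
    (hchi01 : ∀ z : ℝ × ℝ, 0 ≤ chi z ∧ chi z ≤ 1)
    (hg : ∀ (z : ℝ × ℝ) (t : ℝ), g z t = chi z * f t + (1 - chi z) * ftilde t) :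
    ∀ ζ : ℝ, 0 < ζ → ∃ Cζ : ℝ, 0 < Cζ ∧ ∀ (z : ℝ × ℝ) (t : ℝ),
      (∫ s in (0 : ℝ)..t, g z s) ≤ ((δ + ζ) / 2) * t ^ 2 + Cζ * |t| ^ (p + 2) := by
  intro ζ hζ
  have hθ0 : (0 : ℝ) < θ - 2 := by linarith
  have hk0 : (0 : ℝ) < k := lt_trans (div_pos (by linarith) hθ0) hk
  have hV : (0 : ℝ) < V₀ / k := div_pos hV₀ hk0
  have haα : (0 : ℝ) < a + α₀ := by linarith
  -- differentiability facts
  have h2 : ContDiff ℝ (1 + 1) f := by norm_num; exact hf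
  rw [contDiff_succ_iff_deriv] at h2
  have hfd : Differentiable ℝ f := h2.1
  have hf'd : Differentiable ℝ (deriv f) := h2.2.2.differentiable one_ne_zero
  have hfc : Continuous f := hfd.continuous
  have hphic : Continuous phi := hphi.continuous
  -- rpow step lemma
  have hstep : ∀ q : ℝ, q ≠ 0 → q + 1 ≠ 0 → ∀ t : ℝ, |t| ^ q * |t| = |t| ^ (q + 1) := by
    intro q hq hq1 t
    rcases eq_or_ne t 0 with rfl | ht
    · simp [Real.zero_rpow hq, Real.zero_rpow hq1]
    · rw [Real.rpow_add_one (abs_ne_zero.mpr ht)]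
  have hp10 : p - 1 ≠ 0 := (sub_pos.mpr hp1).ne'
  have hp0 : p ≠ 0 := (by linarith : (0:ℝ) < p).ne'
  have hp1' : p + 1 ≠ 0 := (by linarith : (0:ℝ) < p + 1).ne'
  -- membership in uIcc gives abs bound
  have habs : ∀ t x : ℝ, x ∈ Set.uIcc (0 : ℝ) t → |x| ≤ |t| := by
    intro t x hx
    rcases Set.mem_uIcc.mp hx with ⟨h1, h2⟩ | ⟨h1, h2⟩
    · rw [abs_of_nonneg h1]; exact h2.trans (le_abs_self t)
    · rw [abs_of_nonpos h2]; exact (neg_le_neg h1).trans (neg_le_abs t)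
  have hrmono : ∀ (q : ℝ) (t x : ℝ), 0 ≤ q → |x| ≤ |t| → |x| ^ q ≤ |t| ^ q :=
    fun q t x hq h => Real.rpow_le_rpow (abs_nonneg x) h hq
  -- |f'(t)| ≤ C |t|^p
  have hA : ∀ t : ℝ, |deriv f t| ≤ C * |t| ^ p := by
    intro t
    have key : ‖deriv f t - deriv f 0‖ ≤ C * |t| ^ (p - 1) * ‖t - 0‖ := by
      apply (convex_uIcc (0 : ℝ) t).norm_image_sub_le_of_norm_deriv_le
        (fun x _ => hf'd x) ?_ (Set.left_mem_uIcc) (Set.right_mem_uIcc)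
      intro x hx
      rw [Real.norm_eq_abs]
      exact (hf'' x).trans (mul_le_mul_of_nonneg_left
        (hrmono (p - 1) t x (by linarith) (habs t x hx)) hC.le)
    rw [hf'0, sub_zero, sub_zero, Real.norm_eq_abs, Real.norm_eq_abs] at key
    calc |deriv f t| ≤ C * |t| ^ (p - 1) * |t| := key
      _ = C * |t| ^ p := by
          rw [mul_assoc, hstep (p - 1) hp10 (ne_of_gt (show (0:ℝ) < p - 1 + 1 by linarith)) t, show p - 1 + 1 = p by ring]
  -- |f(t)| ≤ C |t|^(p+1)
  have hB : ∀ t : ℝ, |f t| ≤ C * |t| ^ (p + 1) := by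
    intro t
    have key : ‖f t - f 0‖ ≤ C * |t| ^ p * ‖t - 0‖ := by
      apply (convex_uIcc (0 : ℝ) t).norm_image_sub_le_of_norm_deriv_le
        (fun x _ => hfd x) ?_ (Set.left_mem_uIcc) (Set.right_mem_uIcc)
      intro x hx
      rw [Real.norm_eq_abs]
      exact (hA x).trans (mul_le_mul_of_nonneg_left
        (hrmono p t x (by linarith) (habs t x hx)) hC.le)
    rw [hf0, sub_zero, sub_zero, Real.norm_eq_abs, Real.norm_eq_abs] at key
    calc |f t| ≤ C * |t| ^ p * |t| := key
      _ = C * |t| ^ (p + 1) := by rw [mul_assoc, hstep p hp0 (ne_of_gt (show (0:ℝ) < p + 1 by linarith)) t]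
  -- |∫ f| ≤ C |t|^(p+2)
  have hFint : ∀ t : ℝ, |∫ s in (0 : ℝ)..t, f s| ≤ C * |t| ^ (p + 2) := by
    intro t
    have key : ‖∫ s in (0 : ℝ)..t, f s‖ ≤ C * |t| ^ (p + 1) * |t - 0| := by
      apply intervalIntegral.norm_integral_le_of_norm_le_const
      intro x hx
      rw [Real.norm_eq_abs]
      exact (hB x).trans (mul_le_mul_of_nonneg_left
        (hrmono (p + 1) t x (by linarith) (habs t x (Set.uIoc_subset_uIcc hx))) hC.le)
    rw [sub_zero, Real.norm_eq_abs] at key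
    calc |∫ s in (0 : ℝ)..t, f s| ≤ C * |t| ^ (p + 1) * |t| := key
      _ = C * |t| ^ (p + 2) := by
          rw [mul_assoc, hstep (p + 1) hp1' (ne_of_gt (show (0:ℝ) < p + 1 + 1 by linarith)) t, show p + 1 + 1 = p + 2 by ring]
  -- the constant
  have hKp : 0 < (V₀ / k) / (a + α₀) ^ p := div_pos hV (Real.rpow_pos_of_pos haα p)
  obtain ⟨M, hM⟩ : ∃ M : ℝ, M = C + V₀ / k / (a + α₀) ^ p := ⟨_, rfl⟩
  have hM0 : 0 < M := by rw [hM]; linarith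
  have hCM : C ≤ M := by rw [hM]; linarith
  have hphie' : ∀ s : ℝ, phi s = phi |s| := by
    intro s
    rcases abs_cases s with ⟨h, _⟩ | ⟨h, _⟩
    · rw [h]
    · rw [h, ← hphie]
  have hftb : ∀ s : ℝ, |ftilde s| ≤ M * |s| ^ (p + 1) := by
    intro s
    rcases le_or_gt |s| (a + α₀) with hs | hs
    · have hφ : phi s = 1 := by rw [hphie' s]; exact hphi1 _ (abs_nonneg s) hs
      rw [hft s, hφ]
      simp only [sub_self, zero_mul, mul_one, add_zero]
      exact (hB s).trans (mul_le_mul_of_nonneg_right hCM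
        (Real.rpow_nonneg (abs_nonneg s) _))
    · have h01 := hphi01 s
      have hsp : (a + α₀) ^ p ≤ |s| ^ p :=
        Real.rpow_le_rpow haα.le hs.le (by linarith)
      have h1 : |s| ^ (p + 1) = |s| ^ p * |s| := (hstep p hp0 (ne_of_gt (show (0:ℝ) < p + 1 by linarith)) s).symm
      have hbig : (V₀ / k) * |s| ≤ (V₀ / k) / (a + α₀) ^ p * |s| ^ (p + 1) := by
        have hap : (a + α₀) ^ p ≠ 0 := (Real.rpow_pos_of_pos haα p).ne'
        have e : (V₀ / k) * |s| = (V₀ / k) / (a + α₀) ^ p * ((a + α₀) ^ p * |s|) := by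
          field_simp
        rw [e, h1]
        exact mul_le_mul_of_nonneg_left
          (mul_le_mul_of_nonneg_right hsp (abs_nonneg s)) hKp.le
      calc |ftilde s| = |f s * phi s + (1 - phi s) * (V₀ / k) * s| := by rw [hft s]
        _ ≤ |f s * phi s| + |(1 - phi s) * (V₀ / k) * s| := abs_add_le _ _
        _ ≤ |f s| * 1 + 1 * (V₀ / k) * |s| := by
            rw [abs_mul, abs_mul, abs_mul]
            have e1 : |phi s| ≤ 1 := by rw [abs_of_nonneg h01.1]; exact h01.2
            have e2 : |1 - phi s| ≤ 1 := by
              rw [abs_of_nonneg (by linarith [h01.2] : (0:ℝ) ≤ 1 - phi s)]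
              linarith [h01.1]
            have e3 : |V₀ / k| = V₀ / k := abs_of_nonneg hV.le
            rw [e3]
            exact add_le_add (mul_le_mul_of_nonneg_left e1 (abs_nonneg _))
              (mul_le_mul_of_nonneg_right (mul_le_mul_of_nonneg_right e2 hV.le)
                (abs_nonneg s))
        _ = |f s| + (V₀ / k) * |s| := by ring
        _ ≤ C * |s| ^ (p + 1) + (V₀ / k) / (a + α₀) ^ p * |s| ^ (p + 1) :=
            add_le_add (hB s) hbig
        _ = M * |s| ^ (p + 1) := by rw [hM]; ring
  -- continuity of ftilde
  have hftc : Continuous ftilde := by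
    have : ftilde = fun t => f t * phi t + (1 - phi t) * (V₀ / k) * t := funext hft
    rw [this]
    exact ((hfc.mul hphic).add
      (((continuous_const.sub hphic).mul continuous_const).mul continuous_id))
  -- |∫ ftilde| ≤ M |t|^(p+2)
  have hFtint : ∀ t : ℝ, |∫ s in (0 : ℝ)..t, ftilde s| ≤ M * |t| ^ (p + 2) := by
    intro t
    have key : ‖∫ s in (0 : ℝ)..t, ftilde s‖ ≤ M * |t| ^ (p + 1) * |t - 0| := by
      apply intervalIntegral.norm_integral_le_of_norm_le_const
      intro x hx
      rw [Real.norm_eq_abs]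
      exact (hftb x).trans (mul_le_mul_of_nonneg_left
        (hrmono (p + 1) t x (by linarith) (habs t x (Set.uIoc_subset_uIcc hx))) hM0.le)
    rw [sub_zero, Real.norm_eq_abs] at key
    calc |∫ s in (0 : ℝ)..t, ftilde s| ≤ M * |t| ^ (p + 1) * |t| := key
      _ = M * |t| ^ (p + 2) := by
          rw [mul_assoc, hstep (p + 1) hp1' (ne_of_gt (show (0:ℝ) < p + 1 + 1 by linarith)) t, show p + 1 + 1 = p + 2 by ring]
  -- conclude
  refine ⟨M, hM0, fun z t => ?_⟩
  have hz := hchi01 z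
  have hint : (∫ s in (0 : ℝ)..t, g z s)
      = chi z * (∫ s in (0 : ℝ)..t, f s) + (1 - chi z) * (∫ s in (0 : ℝ)..t, ftilde s) := by
    have h1 : (∫ s in (0 : ℝ)..t, g z s)
        = ∫ s in (0 : ℝ)..t, (chi z * f s + (1 - chi z) * ftilde s) := by
      apply intervalIntegral.integral_congr
      intro s _
      exact hg z s
    rw [h1, intervalIntegral.integral_add, intervalIntegral.integral_const_mul,
      intervalIntegral.integral_const_mul]
    · exact ((continuous_const.mul hfc)).intervalIntegrable _ _
    · exact ((continuous_const.mul hftc)).intervalIntegrable _ _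
  rw [hint]
  have h1 : chi z * (∫ s in (0 : ℝ)..t, f s) ≤ chi z * (M * |t| ^ (p + 2)) := by
    apply mul_le_mul_of_nonneg_left _ hz.1
    calc (∫ s in (0 : ℝ)..t, f s) ≤ |∫ s in (0 : ℝ)..t, f s| := le_abs_self _
      _ ≤ C * |t| ^ (p + 2) := hFint t
      _ ≤ M * |t| ^ (p + 2) :=
          mul_le_mul_of_nonneg_right hCM (Real.rpow_nonneg (abs_nonneg t) _)
  have h2 : (1 - chi z) * (∫ s in (0 : ℝ)..t, ftilde s)
      ≤ (1 - chi z) * (M * |t| ^ (p + 2)) := by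
    apply mul_le_mul_of_nonneg_left _ (by linarith [hz.2])
    calc (∫ s in (0 : ℝ)..t, ftilde s) ≤ |∫ s in (0 : ℝ)..t, ftilde s| := le_abs_self _
      _ ≤ M * |t| ^ (p + 2) := hFtint t
  have hq : 0 ≤ ((δ + ζ) / 2) * t ^ 2 := by positivity
  calc chi z * (∫ s in (0 : ℝ)..t, f s) + (1 - chi z) * (∫ s in (0 : ℝ)..t, ftilde s)
      ≤ chi z * (M * |t| ^ (p + 2)) + (1 - chi z) * (M * |t| ^ (p + 2)) := add_le_add h1 h2
    _ = M * |t| ^ (p + 2) := by ring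
    _ ≤ ((δ + ζ) / 2) * t ^ 2 + M * |t| ^ (p + 2) := by linarith
end
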